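/- Let M be an invertible real n×n matrix with (M⁻¹)ᵢᵢ > 0 for a fixed index i. Let X = (X₁,…,Xₙ) be a random vector with values in [0,∞)ⁿ such that for every d ∈ ℝⁿ with all dⱼ ≥ 0, E[exp(−Σⱼ dⱼXⱼ)] = det(M)/det(D + M), where D is the diagonal matrix with diagonal entries d₁,…,dₙ. Then Xᵢ has the exponential distribution with rate 1/(M⁻¹)ᵢᵢ, i.e. E[exp(−dXᵢ)] = (1/(M⁻¹)ᵢᵢ)/(d + 1/(M⁻¹)ᵢᵢ) for all d ≥ 0 and the law of Xᵢ is the exponential distribution with mean (M⁻¹)ᵢᵢ. -/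

import Mathlib

/-!
Putting `d = dᵢ eᵢ` in the Laplace transform, the determinant of `D + M` is affine in `dᵢ`,
`det (D + M) = dᵢ adj(M)ᵢᵢ + det M` (expand along row `i`), and `adj(M)ᵢᵢ = (M⁻¹)ᵢᵢ det M`.
So `E[exp(-dᵢ Xᵢ)] = 1 / (1 + dᵢ (M⁻¹)ᵢᵢ)`, the Laplace transform of the exponential law with
mean `(M⁻¹)ᵢᵢ`. Finally, a finite measure on `[0, ∞)` is determined by its Laplace transform:
the functions `x ↦ exp (-t x)` span a point-separating algebra of bounded continuous functions,
and such an algebra determines finite measures on a Polish space.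
-/

open MeasureTheory ProbabilityTheory Matrix

open Real Set
open scoped NNReal BoundedContinuousFunction

namespace Matrix

variable {ι : Type*} [Fintype ι] [DecidableEq ι]

lemma det_diagonal_single_add {R : Type*} [CommRing R] (M : Matrix ι ι R) (i : ι) (d : R) :
    (diagonal (Pi.single i d) + M).det = d * M.adjugate i i + M.det := by
  have h : diagonal (Pi.single i d) + M = M.updateRow i (d • Pi.single i 1 + M i) := by
    ext j k
    by_cases hj : j = i
    · subst hj
      simp [diagonal_apply, Pi.single_apply, eq_comm, mul_ite]
    · simp [updateRow_ne hj, diagonal_apply, Pi.single_eq_of_ne hj]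
  rw [h, det_updateRow_add, det_updateRow_smul, updateRow_eq_self, adjugate_apply]

lemma det_div_det_diagonal_single_add {K : Type*} [Field K] {M : Matrix ι ι K}
    (hM : IsUnit M.det) {i : ι} (hMi : M⁻¹ i i ≠ 0) (d : K) :
    M.det / (diagonal (Pi.single i d) + M).det = (M⁻¹ i i)⁻¹ / (d + (M⁻¹ i i)⁻¹) := by
  have hadj : M.adjugate i i = M⁻¹ i i * M.det := by
    rw [inv_def, Ring.inverse_eq_inv, smul_apply, smul_eq_mul]
    field_simp [hM.ne_zero]
  set a := M⁻¹ i i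
  calc M.det / (diagonal (Pi.single i d) + M).det
      = M.det / (M.det * (a * (d + a⁻¹))) := by
        rw [det_diagonal_single_add, hadj, mul_add, mul_inv_cancel₀ hMi]; ring
    _ = a⁻¹ / (d + a⁻¹) := by
        rw [div_mul_eq_div_div, div_self hM.ne_zero, one_div, mul_inv, div_eq_mul_inv]

end Matrix

namespace ProbabilityTheory

lemma expMeasure_eq_withDensity (r : ℝ) :
    expMeasure r = volume.withDensity (exponentialPDF r) := rfl

lemma expMeasure_ae_nonneg (r : ℝ) : ∀ᵐ x ∂expMeasure r, 0 ≤ x := by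
  simp only [ae_iff, not_le]
  exact (withDensity_apply _ measurableSet_Iio).trans (lintegral_exponentialPDF_of_nonpos le_rfl)

lemma integral_exp_neg_mul_expMeasure {r t : ℝ} (hr : 0 < r) (ht : -r < t) :
    ∫ x, rexp (-t * x) ∂expMeasure r = r / (t + r) := by
  have hmeas : Measurable (exponentialPDF r) := (measurable_exponentialPDFReal r).ennreal_ofReal
  rw [expMeasure_eq_withDensity, integral_withDensity_eq_integral_toReal_smul hmeas
      (ae_of_all _ fun _ => ENNReal.ofReal_lt_top),
    ← setIntegral_eq_integral_of_forall_compl_eq_zero (s := Ici 0), integral_Ici_eq_integral_Ioi]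
  · rw [setIntegral_congr_fun measurableSet_Ioi (g := fun x => r * rexp (-(t + r) * x)),
      integral_const_mul, integral_exp_mul_Ioi (by linarith)]
    · field_simp
      simp
    · intro x hx
      simp only [exponentialPDF_of_nonneg hx.le, smul_eq_mul, mul_assoc, ← exp_add,
        ENNReal.toReal_ofReal (by positivity : 0 ≤ r * rexp (-(r * x)))]
      ring_nf
  · intro x hx
    simp [exponentialPDF_of_neg (not_le.1 hx)]

end ProbabilityTheory

namespace NNReal

noncomputable def expNegMul (t : ℝ≥0) : ℝ≥0 →ᵇ ℝ :=
  .ofNormedAddCommGroup (fun x => rexp (-(t * x))) (by fun_prop) 1 fun x => by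
    rw [norm_of_nonneg (exp_nonneg _), exp_le_one_iff, neg_nonpos]; positivity

@[simp] lemma expNegMul_apply (t x : ℝ≥0) : expNegMul t x = rexp (-(t * x)) := rfl

lemma expNegMul_zero : expNegMul 0 = 1 := by ext x; simp

lemma expNegMul_add (s t : ℝ≥0) : expNegMul (s + t) = expNegMul s * expNegMul t := by
  ext x; simp [← exp_add]; ring_nf

noncomputable def laplaceAlgebra : StarSubalgebra ℝ (ℝ≥0 →ᵇ ℝ) :=
  { (Submodule.span ℝ (Set.range expNegMul)).toSubalgebra
      (Submodule.subset_span ⟨0, expNegMul_zero⟩) fun f g hf hg => by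
        have := Submodule.mul_mem_mul hf hg
        rw [Submodule.span_mul_span] at this
        refine Submodule.span_mono ?_ this
        rintro _ ⟨_, ⟨s, rfl⟩, _, ⟨t, rfl⟩, rfl⟩
        exact ⟨s + t, expNegMul_add s t⟩ with
    star_mem' := fun {f} hf => by rwa [show star f = f by ext; simp] }

lemma separatesPoints_laplaceAlgebra :
    (laplaceAlgebra.map (BoundedContinuousFunction.toContinuousMapStarₐ ℝ)).SeparatesPoints := by
  intro x y hxy
  have hmem : expNegMul 1 ∈ laplaceAlgebra := Submodule.subset_span ⟨1, rfl⟩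
  refine ⟨_, ⟨_, ⟨_, hmem, rfl⟩, rfl⟩, ?_⟩
  simpa [NNReal.coe_inj] using hxy

lemma integral_eq_of_mem_span_expNegMul {μ ν : Measure ℝ≥0} [IsFiniteMeasure μ]
    [IsFiniteMeasure ν] (h : ∀ t, ∫ x, expNegMul t x ∂μ = ∫ x, expNegMul t x ∂ν)
    {f : ℝ≥0 →ᵇ ℝ} (hf : f ∈ Submodule.span ℝ (Set.range expNegMul)) :
    ∫ x, f x ∂μ = ∫ x, f x ∂ν := by
  induction hf using Submodule.span_induction with
  | mem _ hf => obtain ⟨t, rfl⟩ := hf; exact h t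
  | zero => simp
  | add f g _ _ hf hg =>
    simp only [BoundedContinuousFunction.coe_add, Pi.add_apply]
    rw [integral_add (f.integrable μ) (g.integrable μ),
      integral_add (f.integrable ν) (g.integrable ν), hf, hg]
  | smul c f _ hf => simp [integral_const_mul, hf]

end NNReal

namespace MeasureTheory.Measure

theorem ext_of_laplace_nnreal {μ ν : Measure ℝ≥0} [IsFiniteMeasure μ] [IsFiniteMeasure ν]
    (h : ∀ t : ℝ≥0, ∫ x, rexp (-(t * x)) ∂μ = ∫ x, rexp (-(t * x)) ∂ν) : μ = ν :=
  ext_of_forall_mem_subalgebra_integral_eq_of_polish NNReal.separatesPoints_laplaceAlgebra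
    fun _ hf => NNReal.integral_eq_of_mem_span_expNegMul h hf

lemma map_coe_map_toNNReal {μ : Measure ℝ} (hμ : ∀ᵐ x ∂μ, 0 ≤ x) :
    (μ.map Real.toNNReal).map ((↑) : ℝ≥0 → ℝ) = μ := by
  rw [Measure.map_map measurable_coe_nnreal_real measurable_real_toNNReal]
  conv_rhs => rw [← Measure.map_id (μ := μ)]
  exact Measure.map_congr (hμ.mono fun x hx => Real.coe_toNNReal x hx)

theorem ext_of_laplace {μ ν : Measure ℝ} [IsFiniteMeasure μ] [IsFiniteMeasure ν]
    (hμ : ∀ᵐ x ∂μ, 0 ≤ x) (hν : ∀ᵐ x ∂ν, 0 ≤ x)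
    (h : ∀ t, 0 ≤ t → ∫ x, rexp (-t * x) ∂μ = ∫ x, rexp (-t * x) ∂ν) : μ = ν := by
  have laplace_map {κ : Measure ℝ} (hκ : ∀ᵐ x ∂κ, 0 ≤ x) (t : ℝ≥0) :
      ∫ x, rexp (-(t * x)) ∂κ.map Real.toNNReal = ∫ x, rexp (-t * x) ∂κ := by
    rw [integral_map measurable_real_toNNReal.aemeasurable (by fun_prop)]
    refine integral_congr_ae (hκ.mono fun x hx => ?_)
    simp [Real.coe_toNNReal x hx]
  rw [← μ.map_coe_map_toNNReal hμ, ← ν.map_coe_map_toNNReal hν]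
  congr 1
  exact ext_of_laplace_nnreal fun t => by rw [laplace_map hμ, laplace_map hν, h t t.2]

end MeasureTheory.Measure

theorem marginal_is_exponential {n : ℕ} (M : Matrix (Fin n) (Fin n) ℝ)
    (hM : IsUnit M.det) (i : Fin n) (hMi : 0 < M⁻¹ i i)
    {Ω : Type*} [MeasurableSpace Ω] (P : Measure Ω) [IsProbabilityMeasure P]
    (X : Ω → Fin n → ℝ) (hXm : Measurable X) (hX0 : ∀ ω j, 0 ≤ X ω j)
    (hlap : ∀ d : Fin n → ℝ, (∀ j, 0 ≤ d j) →
      ∫ ω, Real.exp (-(∑ j, d j * X ω j)) ∂P = M.det / (Matrix.diagonal d + M).det) :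
    (∀ d : ℝ, 0 ≤ d →
        ∫ ω, Real.exp (-d * X ω i) ∂P = (M⁻¹ i i)⁻¹ / (d + (M⁻¹ i i)⁻¹)) ∧
      Measure.map (fun ω => X ω i) P = expMeasure (M⁻¹ i i)⁻¹ := by
  have hXi : Measurable fun ω => X ω i := (measurable_pi_apply i).comp hXm
  have hrate : 0 < (M⁻¹ i i)⁻¹ := inv_pos.mpr hMi
  have laplace (d : ℝ) (hd : 0 ≤ d) :
      ∫ ω, rexp (-d * X ω i) ∂P = (M⁻¹ i i)⁻¹ / (d + (M⁻¹ i i)⁻¹) := by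
    have := hlap (Pi.single i d) (fun j => (Pi.single_nonneg (α := fun _ => ℝ)).2 hd j)
    simpa [Pi.single_apply, det_div_det_diagonal_single_add hM hMi.ne'] using this
  refine ⟨laplace, ?_⟩
  have := isProbabilityMeasure_expMeasure hrate
  refine Measure.ext_of_laplace ((ae_map_iff hXi.aemeasurable measurableSet_Ici).2
    (ae_of_all _ (hX0 · i))) (expMeasure_ae_nonneg _) fun t ht => ?_
  rw [integral_map hXi.aemeasurable (by fun_prop), laplace t ht,
    integral_exp_neg_mul_expMeasure hrate (by linarith)]
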